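/- Suppose W_d takes exactly three nonzero values A < 0 < B and C on GF(2^m)^* with C not strictly between A and B. If N_C > 0 denotes the number of a with W_d(a) = C, then 2^{2m} - 2^m(A+B) + (2^m-1)AB > 0, and hence, using |A| < 2^m and B ≥ 1, we get AB > -2^{m+1}. -/

import Mathlib

/-!
Write `q = 2^m` and `W = W_d`. Since `x ↦ x^d` permutes `GF(2^m)` we have `W(0) = 0`, and
orthogonality of the additive character `(-1)^{Tr}` gives `Σ_a W(a) = q` and `Σ_a W(a)^2 = q^2`.
Hence `Σ_{a ≠ 0} (W(a) - A)(W(a) - B) = q^2 - q(A + B) + (q - 1)AB`. Every term vanishes unless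
`W(a) = C`, and then it equals `(C - A)(C - B) > 0` because `C` lies outside `[A, B]`; as `C` is a
value of `W`, the sum is positive. The bound `AB > -2q` follows using `A ≥ 1 - q` and `B ≥ 1`.
-/

open Finset

/-- `(-1)^{Tr(y)}` as an integer, where `Tr` is the absolute trace to `GF(2)`. -/
noncomputable def sgn (F : Type*) [Field F] [Fintype F] [Algebra (ZMod 2) F] (y : F) : ℤ :=
  if Algebra.trace (ZMod 2) F y = 0 then 1 else -1

/-- The Walsh transform `W_d(a) = Σ_{x ∈ GF(2^m)} (-1)^{Tr(x^d + a x)}`. -/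
noncomputable def Wd (F : Type*) [Field F] [Fintype F] [Algebra (ZMod 2) F]
    (d : ℕ) (a : F) : ℤ :=
  ∑ x : F, sgn F (x ^ d + a * x)

section ThreeValued

variable {ι R : Type*} [CommRing R]

lemma sum_sub_mul_sub (s : Finset ι) (f : ι → R) (A B : R) :
    ∑ i ∈ s, (f i - A) * (f i - B) =
      ∑ i ∈ s, f i ^ 2 - (A + B) * ∑ i ∈ s, f i + #s * (A * B) := by
  simp only [show ∀ i, (f i - A) * (f i - B) = f i ^ 2 - (A + B) * f i + A * B from
    fun i => by ring, sum_add_distrib, sum_sub_distrib, ← mul_sum, sum_const, nsmul_eq_mul]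
  ring

lemma sum_sub_mul_sub_pos [LinearOrder R] [IsStrictOrderedRing R] {s : Finset ι} {f : ι → R}
    {A B C : R} (hf : ∀ i ∈ s, f i = A ∨ f i = B ∨ f i = C) (hC : ∃ i ∈ s, f i = C)
    (hCAB : 0 < (C - A) * (C - B)) : 0 < ∑ i ∈ s, (f i - A) * (f i - B) := by
  refine sum_pos' (fun i hi => ?_) (hC.imp fun i ⟨hi, hiC⟩ => ⟨hi, by rwa [hiC]⟩)
  rcases hf i hi with h | h | h <;> simp [h, hCAB.le]

lemma sub_mul_sub_pos_of_notMem_Icc [LinearOrder R] [IsStrictOrderedRing R] {A B C : R}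
    (hAB : A ≤ B) (hC : C ∉ Set.Icc A B) : 0 < (C - A) * (C - B) := by
  rcases lt_or_ge C A with hCA | hAC
  · exact mul_pos_of_neg_of_neg (by linarith) (by linarith)
  · have hBC : B < C := lt_of_not_ge fun h => hC ⟨hAC, h⟩
    exact mul_pos (by linarith) (by linarith)

lemma neg_two_mul_lt_mul {q A B : ℤ} (hA : |A| < q) (hB : 0 < B)
    (h : 0 < q ^ 2 - q * (A + B) + (q - 1) * (A * B)) : -(2 * q) < A * B := by
  have hq : 1 ≤ q := by linarith [abs_nonneg A]
  have hA' : 1 - q ≤ A := by linarith [neg_abs_le A]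
  by_contra! hAB
  -- The right side of `h` is `(q - 1)(AB + 2q) - q(A + B + q - 2)`.
  nlinarith [mul_nonneg (sub_nonneg.2 hq) (by linarith : 0 ≤ -(A * B) - 2 * q),
    mul_nonneg (by linarith : 0 ≤ q) (by linarith : 0 ≤ A + B + q - 2)]

end ThreeValued

section Walsh

variable {F : Type*} [Field F] [Fintype F] [Algebra (ZMod 2) F]

lemma sgn_add (y z : F) : sgn F (y + z) = sgn F y * sgn F z := by
  unfold sgn
  rw [map_add]
  generalize Algebra.trace (ZMod 2) F y = s
  generalize Algebra.trace (ZMod 2) F z = t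
  revert s t
  decide

lemma sgn_zero : sgn F 0 = 1 := by
  simp [sgn]

variable (F) in
noncomputable def traceChar : AddChar F ℤ where
  toFun := sgn F
  map_zero_eq_one' := sgn_zero
  map_add_eq_mul' := sgn_add

lemma traceChar_ne_zero : traceChar F ≠ 0 := by
  have : FiniteDimensional (ZMod 2) F := Module.Finite.of_finite
  obtain ⟨c, hc⟩ := Algebra.trace_surjective (ZMod 2) F 1
  refine AddChar.ne_zero_iff.mpr ⟨c, ?_⟩
  simp [traceChar, sgn, hc]

lemma sum_sgn : ∑ y : F, sgn F y = 0 := by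
  classical
  exact (AddChar.sum_eq_ite (traceChar F)).trans (if_neg traceChar_ne_zero)

lemma sum_sgn_mul_of_ne_zero {x : F} (hx : x ≠ 0) : ∑ a : F, sgn F (a * x) = 0 := by
  rw [Fintype.sum_bijective _ (mulRight_bijective₀ x hx) _ (sgn F) fun _ => rfl, sum_sgn]

lemma sum_Wd {d : ℕ} (hd : d ≠ 0) : ∑ a : F, Wd F d a = Fintype.card F := by
  unfold Wd
  rw [sum_comm, sum_eq_single (0 : F)]
  · simp [zero_pow hd, sgn_zero]
  · intro x _ hx
    simp only [sgn_add, ← mul_sum, sum_sgn_mul_of_ne_zero hx, mul_zero]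
  · simp

lemma sum_Wd_sq (d : ℕ) : ∑ a : F, Wd F d a ^ 2 = (Fintype.card F : ℤ) ^ 2 := by
  have : CharP F 2 := charP_of_injective_algebraMap' (ZMod 2) 2
  have expand (a : F) : Wd F d a ^ 2 =
      ∑ x : F, ∑ y : F, sgn F (x ^ d + y ^ d) * sgn F (a * (x + y)) := by
    simp only [Wd, sq, sum_mul_sum, ← sgn_add]
    congr! 3
    ring
  -- In characteristic 2 only `y = x` survives the sum over `a`, and then `x^d + y^d = 0`.
  have diagonal (x : F) :
      ∑ a : F, ∑ y : F, sgn F (x ^ d + y ^ d) * sgn F (a * (x + y)) = Fintype.card F := by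
    rw [sum_comm, sum_eq_single x]
    · simp [CharTwo.add_self_eq_zero, sgn_zero]
    · intro y _ hyx
      have hxy : x + y ≠ 0 := fun h => hyx (CharTwo.add_eq_zero.mp h).symm
      simp only [← mul_sum, sum_sgn_mul_of_ne_zero hxy, mul_zero]
    · simp
  simp only [expand]
  rw [sum_comm]
  simp [diagonal, sq]

lemma pow_bijective_of_coprime {G₀ : Type*} [GroupWithZero G₀] [Finite G₀] {d : ℕ}
    (hd0 : d ≠ 0) (hd : d.Coprime (Nat.card G₀ - 1)) :
    Function.Bijective fun x : G₀ => x ^ d := by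
  rw [← Finite.injective_iff_bijective]
  have hunits : (Nat.card G₀ˣ).Coprime d := Nat.card_units G₀ ▸ hd.symm
  intro x y hxy
  simp only at hxy
  rcases eq_or_ne x 0 with rfl | hx
  · rw [zero_pow hd0, eq_comm, pow_eq_zero_iff hd0] at hxy
    exact hxy.symm
  rcases eq_or_ne y 0 with rfl | hy
  · rwa [zero_pow hd0, pow_eq_zero_iff hd0] at hxy
  have := hunits.pow_left_bijective.injective (a₁ := Units.mk0 x hx) (a₂ := Units.mk0 y hy)
    (Units.ext (by simpa using hxy))
  simpa using congrArg Units.val this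

lemma Wd_zero {d : ℕ} (hd0 : d ≠ 0) (hd : d.Coprime (Fintype.card F - 1)) : Wd F d 0 = 0 := by
  simp only [Wd, zero_mul, add_zero]
  rw [← Nat.card_eq_fintype_card] at hd
  rw [Fintype.sum_bijective _ (pow_bijective_of_coprime hd0 hd) _ (sgn F) fun _ => rfl, sum_sgn]

lemma sum_Wd_sub_mul_sub [DecidableEq F] {d : ℕ} (hd0 : d ≠ 0)
    (hd : d.Coprime (Fintype.card F - 1)) (A B : ℤ) :
    ∑ a ∈ univ \ {0}, (Wd F d a - A) * (Wd F d a - B) =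
      (Fintype.card F : ℤ) ^ 2 - Fintype.card F * (A + B) + (Fintype.card F - 1) * (A * B) := by
  have hsum {k : ℕ} (hk : k ≠ 0) :
      ∑ a ∈ univ \ {0}, Wd F d a ^ k = ∑ a : F, Wd F d a ^ k :=
    sum_subset (subset_univ _) fun a _ ha => by simp_all [Wd_zero hd0 hd]
  have hcard : (#(univ \ {(0 : F)}) : ℤ) = Fintype.card F - 1 := by
    rw [card_sdiff_of_subset (by simp), card_univ, card_singleton,
      Nat.cast_sub Fintype.card_pos]
    simp
  have h1 := hsum one_ne_zero
  simp only [pow_one] at h1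
  rw [sum_sub_mul_sub, h1, hsum two_ne_zero, sum_Wd hd0, sum_Wd_sq, hcard]
  ring

end Walsh

theorem stmt_12_general {m : ℕ} (F : Type*) [Field F] [Fintype F] [DecidableEq F]
    [Algebra (ZMod 2) F] (hF : Fintype.card F = 2 ^ m)
    (d : ℕ) (hd : Nat.Coprime d (2 ^ m - 1))
    (hd2 : ¬ ∃ k, d ≡ 2 ^ k [MOD 2 ^ m - 1])
    (A B C : ℤ) (hAC : A ≠ C) (hBC : B ≠ C)
    (hAneg : A < 0) (hBpos : 0 < B)
    (hCout : ¬ (A < C ∧ C < B))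
    (hA' : |A| < 2 ^ m)
    (himg : (Finset.univ \ {(0 : F)}).image (Wd F d) = {A, B, C}) :
    0 < 2 ^ (2 * m) - 2 ^ m * (A + B) + (2 ^ m - 1) * (A * B) ∧
      A * B > -2 ^ (m + 1) := by
  have hd0 : d ≠ 0 := by
    rintro rfl
    rw [Nat.coprime_zero_left] at hd
    exact hd2 ⟨0, by rw [hd]; exact Nat.modEq_one⟩
  have hmem : ∀ a ∈ univ \ {0}, Wd F d a = A ∨ Wd F d a = B ∨ Wd F d a = C := by
    intro a ha
    have := mem_image_of_mem (Wd F d) ha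
    rw [himg] at this
    simpa using this
  have hCval : ∃ a ∈ univ \ {0}, Wd F d a = C := mem_image.mp (himg ▸ by simp)
  have hCAB : 0 < (C - A) * (C - B) :=
    sub_mul_sub_pos_of_notMem_Icc (by linarith) fun ⟨h1, h2⟩ =>
      hCout ⟨lt_of_le_of_ne h1 hAC, lt_of_le_of_ne h2 hBC.symm⟩
  have hpos := sum_sub_mul_sub_pos hmem hCval hCAB
  rw [sum_Wd_sub_mul_sub hd0 (hF ▸ hd), hF, Nat.cast_pow, Nat.cast_ofNat] at hpos
  refine ⟨by rwa [pow_mul'], ?_⟩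
  rw [pow_succ]
  linarith [neg_two_mul_lt_mul hA' hBpos hpos]

/-- positivity of the numerator in the N_C formula, and the resulting
lower bound AB > -2^(m+1). -/
theorem stmt_12 {m : ℕ} (hm : 1 ≤ m) (F : Type*) [Field F] [Fintype F] [DecidableEq F]
    [Algebra (ZMod 2) F] (hF : Fintype.card F = 2 ^ m)
    (d : ℕ) (hd : Nat.Coprime d (2 ^ m - 1))
    (hd2 : ¬ ∃ k, d ≡ 2 ^ k [MOD 2 ^ m - 1])
    (A B C : ℤ) (hAB : A ≠ B) (hAC : A ≠ C) (hBC : B ≠ C)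
    (hAneg : A < 0) (hBpos : 0 < B) (hC : C ≠ 0)
    (hCout : ¬ (A < C ∧ C < B))
    (hA' : |A| < 2 ^ m) (hB' : |B| < 2 ^ m) (hC' : |C| < 2 ^ m)
    (himg : (Finset.univ \ {(0 : F)}).image (Wd F d) = {A, B, C}) :
    0 < 2 ^ (2 * m) - 2 ^ m * (A + B) + (2 ^ m - 1) * (A * B) ∧
      A * B > -2 ^ (m + 1) :=
  stmt_12_general F hF d hd hd2 A B C hAC hBC hAneg hBpos hCout hA' himg
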